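/- Let q, a ∈ ℂ with 0 < |q| < 1, and suppose a ≠ −q^{−k} for all integers k ≥ 0 and a q^k ≠ 1, a² q^{2k} ≠ 1 for all integers k ≥ 1 (so all denominators below are nonzero). Suppose (α_n)_{n≥0}, (β_n)_{n≥0} form a Bailey pair relative to (a, q), i.e. β_n = Σ_{j=0}^{n} α_j / ((q;q)_{n−j} (aq;q)_{n+j}) for all n ≥ 0. Define α'_n = [(1 + a q^{2n}) / ((1 + a) q^n)] α_n and β'_n = [q^{−n} / (−a;q)_{2n}] Σ_{j=0}^{n} [(−1)^{n−j} q^{(n−j)² − (n−j)} / (q²;q²)_{n−j}] β_j. Then (α'_n, β'_n) is a Bailey pair relative to (a², q²), i.e. β'_n = Σ_{j=0}^{n} α'_j / ((q²;q²)_{n−j} (a²q²;q²)_{n+j}) for all n ≥ 0. -/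

import Mathlib

/-!
Interchanging the two summations, the coefficient of `α r` on the left-hand side at index
`n = r + m` is, with `b = a q^{2r}`, a multiple of the terminating sum
`S_m(b) = ∑_k (-1)^k q^{k²-k} (b q^{m-k+1};q)_k / ((q²;q²)_k (q;q)_{m-k})`,
and the theorem reduces to the evaluation
`S_m(b) (1 + b q^m) (q²;q²)_m = q^m (1 + b) (-b q^m;q)_m`.
Both sides satisfy the same first-order recurrence in `m`; for `S_m` it is proved by creative
telescoping with a Wilf–Zeilberger certificate.
-/

open Finset

/-- The q-Pochhammer symbol `(z;q)_n = ∏_{k=0}^{n-1} (1 - z q^k)`. -/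
def qPoch (z q : ℂ) (n : ℕ) : ℂ := ∏ k ∈ Finset.range n, (1 - z * q ^ k)

@[simp]
lemma qPoch_zero (z q : ℂ) : qPoch z q 0 = 1 := prod_range_zero _

lemma qPoch_succ (z q : ℂ) (n : ℕ) : qPoch z q (n + 1) = qPoch z q n * (1 - z * q ^ n) :=
  prod_range_succ _ _

lemma qPoch_succ' (z q : ℂ) (n : ℕ) : qPoch z q (n + 1) = (1 - z) * qPoch (z * q) q n := by
  rw [qPoch, prod_range_succ', mul_comm, qPoch]
  simp only [pow_zero, mul_one, pow_succ, mul_assoc, mul_comm q]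

lemma qPoch_add (z q : ℂ) (m n : ℕ) :
    qPoch z q (m + n) = qPoch z q m * qPoch (z * q ^ m) q n := by
  simp only [qPoch, prod_range_add, pow_add, mul_assoc, mul_comm (q ^ m)]

lemma qPoch_sq_sq (z q : ℂ) (n : ℕ) :
    qPoch (z ^ 2) (q ^ 2) n = qPoch z q n * qPoch (-z) q n := by
  rw [qPoch, qPoch, qPoch, ← prod_mul_distrib]
  exact prod_congr rfl fun k _ => by ring

lemma qPoch_ne_zero {z q : ℂ} {n : ℕ} (h : ∀ k < n, z * q ^ k ≠ 1) : qPoch z q n ≠ 0 :=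
  prod_ne_zero_iff.2 fun k hk => sub_ne_zero.2 (h k (mem_range.1 hk)).symm

lemma qPoch_self_ne_zero {q : ℂ} (hq : ∀ j, 0 < j → q ^ j ≠ 1) (n : ℕ) :
    qPoch q q n ≠ 0 :=
  qPoch_ne_zero fun k _ => by simpa [← pow_succ'] using hq (k + 1) k.succ_pos

lemma qPoch_sq_self_ne_zero {q : ℂ} (hq : ∀ j, 0 < j → q ^ j ≠ 1) (n : ℕ) :
    qPoch (q ^ 2) (q ^ 2) n ≠ 0 :=
  qPoch_ne_zero fun k _ => by
    simpa [← pow_mul, ← pow_add] using hq (2 + 2 * k) (by omega)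

lemma add_one_sq_sub_add_one (s : ℕ) : (s + 1) ^ 2 - (s + 1) = s ^ 2 - s + 2 * s := by
  have : s ≤ s ^ 2 := Nat.le_self_pow two_ne_zero s
  have : (s + 1) ^ 2 = s ^ 2 + 2 * s + 1 := by ring
  omega

section WZ

variable (q b : ℂ)

/-- `(b q^{m-k+1};q)_k` stands for `(bq;q)_m / (bq;q)_{m-k}`, which avoids dividing by
factors that depend on `b`. -/
noncomputable def wzTerm (m k : ℕ) : ℂ :=
  (-1) ^ k * q ^ (k ^ 2 - k) * qPoch (b * q ^ (m - k + 1)) q k /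
    (qPoch (q ^ 2) (q ^ 2) k * qPoch q q (m - k))

-- The certificate of `wzTerm_telescope`, found with the q-Zeilberger algorithm.
noncomputable def wzCert (m : ℕ) : ℕ → ℂ
  | 0 => 0
  | k + 1 => wzTerm q b m k * ((1 - q) * q ^ (2 * k) + (1 + b) * q ^ (k + m + 1)
      - b * q ^ (2 * m + 1) - b ^ 2 * q ^ (4 * m + 2))

lemma wzTerm_add_left (k d : ℕ) : wzTerm q b (k + d) k =
    (-1) ^ k * q ^ (k ^ 2 - k) * qPoch (b * q ^ (d + 1)) q k /
      (qPoch (q ^ 2) (q ^ 2) k * qPoch q q d) := by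
  simp only [wzTerm, Nat.add_sub_cancel_left]

lemma wzTerm_zero (m : ℕ) : wzTerm q b m 0 = (qPoch q q m)⁻¹ := by
  simp [wzTerm]

variable {q b}

lemma wzTerm_telescope (hq : ∀ j, 0 < j → q ^ j ≠ 1) {m k : ℕ} (hk : k ≤ m) :
    (1 + b * q ^ (m + 1)) * (1 - q ^ (2 * m + 2)) * wzTerm q b (m + 1) k
      - q * (1 + b * q ^ (2 * m)) * (1 + b * q ^ (2 * m + 1)) * wzTerm q b m k
      = wzCert q b m (k + 1) - wzCert q b m k := by
  obtain ⟨d, rfl⟩ := Nat.exists_eq_add_of_le hk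
  have hqd := qPoch_self_ne_zero hq d
  have hd : 1 - q * q ^ d ≠ 0 := by
    rw [← pow_succ']; exact sub_ne_zero.2 (hq _ d.succ_pos).symm
  cases k with
  | zero =>
    simp only [wzCert, wzTerm_zero, zero_add]
    rw [qPoch_succ q q d]
    field_simp
    ring
  | succ s =>
    have hs : 1 - q ^ 2 * (q ^ 2) ^ s ≠ 0 := by
      rw [← pow_mul, ← pow_add]; exact sub_ne_zero.2 (hq _ (by omega)).symm
    rw [wzCert, wzCert, add_assoc (s + 1) d 1, wzTerm_add_left, wzTerm_add_left,
      show s + 1 + d = s + (d + 1) by omega, wzTerm_add_left, add_one_sq_sub_add_one,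
      qPoch_succ (b * q ^ (d + 1 + 1)), qPoch_succ' (b * q ^ (d + 1)), qPoch_succ q q d,
      qPoch_succ (q ^ 2) (q ^ 2)]
    have := qPoch_sq_self_ne_zero hq s
    field_simp
    ring_nf

lemma wzTerm_last (hq : ∀ j, 0 < j → q ^ j ≠ 1) (m : ℕ) :
    (1 + b * q ^ (m + 1)) * (1 - q ^ (2 * m + 2)) * wzTerm q b (m + 1) (m + 1)
      = -wzCert q b m (m + 1) := by
  have hm : 1 - q ^ 2 * (q ^ 2) ^ m ≠ 0 := by
    rw [← pow_mul, ← pow_add]; exact sub_ne_zero.2 (hq _ (by omega)).symm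
  have hq2 := qPoch_sq_self_ne_zero hq m
  have h1 := wzTerm_add_left q b (m + 1) 0
  have h0 := wzTerm_add_left q b m 0
  simp only [add_zero] at h1 h0
  rw [wzCert, h1, h0, add_one_sq_sub_add_one, qPoch_succ, qPoch_succ (q ^ 2)]
  field_simp
  ring

lemma sum_wzTerm_succ (hq : ∀ j, 0 < j → q ^ j ≠ 1) (m : ℕ) :
    (1 + b * q ^ (m + 1)) * (1 - q ^ (2 * m + 2)) * ∑ k ∈ range (m + 2), wzTerm q b (m + 1) k
      = q * (1 + b * q ^ (2 * m)) * (1 + b * q ^ (2 * m + 1)) *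
          ∑ k ∈ range (m + 1), wzTerm q b m k := by
  have telescope := sum_range_sub (wzCert q b m) (m + 1)
  rw [sum_congr rfl fun k hk =>
      (wzTerm_telescope hq (Nat.lt_succ_iff.1 (mem_range.1 hk))).symm,
    sum_sub_distrib, ← mul_sum, ← mul_sum] at telescope
  rw [sum_range_succ, mul_add, wzTerm_last hq]
  simp only [wzCert] at telescope ⊢
  linear_combination telescope

theorem sum_wzTerm_mul (hq : ∀ j, 0 < j → q ^ j ≠ 1) (hb : ∀ j, b * q ^ j ≠ -1)
    (m : ℕ) :
    (∑ k ∈ range (m + 1), wzTerm q b m k) * ((1 + b * q ^ m) * qPoch (q ^ 2) (q ^ 2) m)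
      = q ^ m * (1 + b) * qPoch (-(b * q ^ m)) q m := by
  induction m with
  | zero => simp [wzTerm_zero]
  | succ m ih =>
    have hbm : 1 + b * q ^ m ≠ 0 := fun h => hb m (by linear_combination h)
    have shift : qPoch (-(b * q ^ m)) q (m + 2)
        = (1 + b * q ^ m) * qPoch (-(b * q ^ (m + 1))) q (m + 1) := by
      rw [qPoch_succ', pow_succ, sub_neg_eq_add, neg_mul, mul_assoc]
    rw [qPoch_succ, qPoch_succ] at shift
    refine mul_left_cancel₀ hbm ?_
    rw [qPoch_succ (q ^ 2), ← pow_mul, ← pow_add]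
    linear_combination (qPoch (q ^ 2) (q ^ 2) m * (1 + b * q ^ m)) * sum_wzTerm_succ hq m
      + q * (1 + b * q ^ (2 * m)) * (1 + b * q ^ (2 * m + 1)) * ih + q ^ (m + 1) * (1 + b) * shift

end WZ

lemma sum_range_sum_range_comm {M : Type*} [AddCommMonoid M] (f : ℕ → ℕ → M) (n : ℕ) :
    ∑ j ∈ range (n + 1), ∑ r ∈ range (j + 1), f j r
      = ∑ r ∈ range (n + 1), ∑ i ∈ range (n - r + 1), f (r + i) r := by
  calc ∑ j ∈ range (n + 1), ∑ r ∈ range (j + 1), f j r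
      = ∑ j ∈ range (n + 1), ∑ r ∈ range (j + 1), f (r + (j - r)) r :=
        sum_congr rfl fun j _ => sum_congr rfl fun r hr => by
          rw [Nat.add_sub_cancel' (Nat.lt_succ_iff.1 (mem_range.1 hr))]
    _ = ∑ r ∈ range (n + 1), ∑ i ∈ range (n + 1 - r), f (r + i) r :=
        sum_range_diag_flip (n + 1) fun r i => f (r + i) r
    _ = _ := sum_congr rfl fun r hr => by
          rw [Nat.sub_add_comm (Nat.lt_succ_iff.1 (mem_range.1 hr))]

section Bailey

variable {q a : ℂ}

lemma qPoch_neg_ne_zero {z : ℂ} (hz : ∀ k, z * q ^ k ≠ -1) (n : ℕ) : qPoch (-z) q n ≠ 0 :=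
  qPoch_ne_zero fun k _ h => hz k (by linear_combination -h)

lemma qPoch_mul_pow_ne_zero (ha : ∀ j, 0 < j → a * q ^ j ≠ 1) (c n : ℕ) :
    qPoch (a * q * q ^ c) q n ≠ 0 :=
  qPoch_ne_zero fun k _ => by
    simpa only [mul_assoc, ← pow_succ', ← pow_add] using ha (c + 1 + k) (by omega)

lemma div_eq_wzTerm_div (ha : ∀ j, 0 < j → a * q ^ j ≠ 1) (hq : ∀ j, 0 < j → q ^ j ≠ 1)
    (r : ℕ) {i m : ℕ} (hi : i ≤ m) :
    (-1) ^ (m - i) * q ^ ((m - i) ^ 2 - (m - i)) / qPoch (q ^ 2) (q ^ 2) (m - i)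
        / (qPoch q q i * qPoch (a * q) q (2 * r + i))
      = wzTerm q (a * q ^ (2 * r)) m (m - i) / qPoch (a * q) q (2 * r + m) := by
  obtain ⟨k, rfl⟩ := Nat.exists_eq_add_of_le hi
  rw [Nat.add_sub_cancel_left, add_comm i k, wzTerm_add_left, add_comm k i, ← add_assoc,
    qPoch_add (a * q) q (2 * r + i) k,
    show a * q ^ (2 * r) * q ^ (i + 1) = a * q * q ^ (2 * r + i) by ring]
  have h₀ : qPoch (a * q) q (2 * r + i) ≠ 0 := by
    simpa using qPoch_mul_pow_ne_zero ha 0 (2 * r + i)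
  have h₁ := qPoch_self_ne_zero hq i
  have h₂ := qPoch_sq_self_ne_zero hq k
  have h₃ := qPoch_mul_pow_ne_zero ha (2 * r + i) k
  set P := qPoch (a * q * q ^ (2 * r + i)) q k
  field_simp

lemma bailey_kernel_eq (hq₀ : q ≠ 0) (hq : ∀ j, 0 < j → q ^ j ≠ 1)
    (ha_neg_one : ∀ j, a * q ^ j ≠ -1) (ha : ∀ j, 0 < j → a * q ^ j ≠ 1) (r m : ℕ) :
    (q ^ (r + m))⁻¹ / qPoch (-a) q (2 * (r + m)) *
        ∑ i ∈ range (m + 1), (-1) ^ (m - i) * q ^ ((m - i) ^ 2 - (m - i))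
          / qPoch (q ^ 2) (q ^ 2) (m - i) / (qPoch q q i * qPoch (a * q) q (2 * r + i))
      = (1 + a * q ^ (2 * r)) / ((1 + a) * q ^ r)
          / (qPoch (q ^ 2) (q ^ 2) m * qPoch (a ^ 2 * q ^ 2) (q ^ 2) (2 * r + m)) := by
  set b := a * q ^ (2 * r) with hb_def
  have hb : ∀ j, b * q ^ j ≠ -1 := fun j => by rw [mul_assoc, ← pow_add]; exact ha_neg_one _
  have reflect := sum_range_reflect (wzTerm q b m) (m + 1)
  simp only [Nat.add_sub_cancel] at reflect
  rw [sum_congr rfl fun i hi => div_eq_wzTerm_div ha hq r (Nat.lt_succ_iff.1 (mem_range.1 hi)),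
    ← sum_div, reflect]
  have hS := sum_wzTerm_mul hq hb m
  have split : qPoch (-a) q (2 * (r + m))
      = qPoch (-a) q (2 * r + m) * qPoch (-(b * q ^ m)) q m := by
    rw [show 2 * (r + m) = 2 * r + m + m by ring, qPoch_add, hb_def, pow_add, neg_mul, mul_assoc]
  have shift : (1 + a) * qPoch (-(a * q)) q (2 * r + m)
      = qPoch (-a) q (2 * r + m) * (1 + b * q ^ m) := by
    rw [← sub_neg_eq_add, ← neg_mul, ← qPoch_succ', qPoch_succ, hb_def, mul_assoc,
      ← pow_add]
    ring
  have hbm : 1 + b * q ^ m ≠ 0 := fun h => hb m (by linear_combination h)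
  have h₁ : 1 + a ≠ 0 := fun h => ha_neg_one 0 (by linear_combination h)
  have h₂ := qPoch_sq_self_ne_zero hq m
  have h₃ := qPoch_neg_ne_zero ha_neg_one (2 * r + m)
  have h₄ := qPoch_neg_ne_zero (z := b * q ^ m)
    (fun k => by rw [mul_assoc, ← pow_add]; exact hb _) m
  have h₅ := qPoch_neg_ne_zero (z := a * q)
    (fun k => by rw [mul_assoc, ← pow_succ']; exact ha_neg_one _) (2 * r + m)
  have h₀ : qPoch (a * q) q (2 * r + m) ≠ 0 := by
    simpa using qPoch_mul_pow_ne_zero ha 0 (2 * r + m)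
  rw [eq_div_of_mul_eq (mul_ne_zero hbm h₂) hS, split, show a ^ 2 * q ^ 2 = (a * q) ^ 2 by ring,
    qPoch_sq_sq (a * q)]
  field_simp
  rw [pow_add]
  linear_combination (q ^ r * q ^ m * (1 + b)) * shift

end Bailey

theorem stmt8_general (q a : ℂ) (hq0 : 0 < ‖q‖) (hq1 : ‖q‖ < 1)
    (ha1 : ∀ k : ℕ, a ≠ -q ^ (-(k : ℤ)))
    (ha2 : ∀ k : ℕ, 1 ≤ k → a * q ^ k ≠ 1)
    (α β : ℕ → ℂ)
    (hBailey : ∀ n : ℕ, β n = ∑ j ∈ Finset.range (n + 1),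
      α j / (qPoch q q (n - j) * qPoch (a * q) q (n + j))) :
    ∀ n : ℕ,
      q ^ (-(n : ℤ)) / qPoch (-a) q (2 * n) *
          ∑ j ∈ Finset.range (n + 1),
            (-1 : ℂ) ^ (n - j) * q ^ ((n - j) ^ 2 - (n - j)) / qPoch (q ^ 2) (q ^ 2) (n - j) *
              β j =
        ∑ j ∈ Finset.range (n + 1),
          ((1 + a * q ^ (2 * j)) / ((1 + a) * q ^ j) * α j) /
            (qPoch (q ^ 2) (q ^ 2) (n - j) * qPoch (a ^ 2 * q ^ 2) (q ^ 2) (n + j)) := by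
  have hq₀ : q ≠ 0 := norm_pos_iff.1 hq0
  have hq (j : ℕ) (hj : 0 < j) : q ^ j ≠ 1 := fun h =>
    (pow_lt_one₀ (norm_nonneg q) hq1 hj.ne').ne (by rw [← norm_pow, h, norm_one])
  have ha_neg_one (j : ℕ) : a * q ^ j ≠ -1 := fun h => ha1 j <| by
    have := pow_ne_zero j hq₀
    rw [zpow_neg, zpow_natCast]
    field_simp
    linear_combination h
  intro n
  simp only [hBailey, mul_sum, sum_range_sum_range_comm, zpow_neg, zpow_natCast]
  refine sum_congr rfl fun r hr => ?_
  obtain ⟨m, rfl⟩ := Nat.exists_eq_add_of_le (Nat.lt_succ_iff.1 (mem_range.1 hr))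
  simp only [Nat.add_sub_cancel_left, Nat.add_sub_add_left, add_right_comm r _ r, ← two_mul]
  rw [mul_div_right_comm, ← bailey_kernel_eq hq₀ hq ha_neg_one ha2 r m, mul_sum, sum_mul]
  exact sum_congr rfl fun i _ => by ring

/-- Lemma 2.3 of the paper (Patkowski): a Bailey pair relative to `(a, q)` transforms
into a Bailey pair relative to `(a², q²)`. -/
theorem stmt8 (q a : ℂ) (hq0 : 0 < ‖q‖) (hq1 : ‖q‖ < 1)
    (ha1 : ∀ k : ℕ, a ≠ -q ^ (-(k : ℤ)))
    (ha2 : ∀ k : ℕ, 1 ≤ k → a * q ^ k ≠ 1)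
    (ha3 : ∀ k : ℕ, 1 ≤ k → a ^ 2 * q ^ (2 * k) ≠ 1)
    (α β : ℕ → ℂ)
    (hBailey : ∀ n : ℕ, β n = ∑ j ∈ Finset.range (n + 1),
      α j / (qPoch q q (n - j) * qPoch (a * q) q (n + j))) :
    ∀ n : ℕ,
      q ^ (-(n : ℤ)) / qPoch (-a) q (2 * n) *
          ∑ j ∈ Finset.range (n + 1),
            (-1 : ℂ) ^ (n - j) * q ^ ((n - j) ^ 2 - (n - j)) / qPoch (q ^ 2) (q ^ 2) (n - j) *
              β j =
        ∑ j ∈ Finset.range (n + 1),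
          ((1 + a * q ^ (2 * j)) / ((1 + a) * q ^ j) * α j) /
            (qPoch (q ^ 2) (q ^ 2) (n - j) * qPoch (a ^ 2 * q ^ 2) (q ^ 2) (n + j)) :=
  stmt8_general q a hq0 hq1 ha1 ha2 α β hBailey
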